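/- Let Γ = (E_{ij})_{i≤n, j≤N} be an n×N random matrix with i.i.d. symmetric exponential entries of variance 1. Then there exist absolute constants c, C > 0 such that c(n + ln N) ≤ E‖Γ : ℓ₁^N → ℓ₁^n‖ ≤ C(n + ln N), where ‖Γ : ℓ₁^N → ℓ₁^n‖ = max_{j≤N} Σ_{i=1}^n |E_{ij}| is the operator norm of Γ from ℓ₁^N to ℓ₁^n. -/

import Mathlib

open MeasureTheory ProbabilityTheory Real

noncomputable section

/-- The density of a symmetric exponential random variable with variance 1. -/
def symExpPDF (x : ℝ) : ℝ := (2:ℝ) ^ (-(1/2 : ℝ)) * Real.exp (-(Real.sqrt 2) * |x|)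

/-- `X` is a symmetric exponential random variable with variance 1. -/
def IsSymExp {Ω : Type*} [MeasureSpace Ω] (X : Ω → ℝ) : Prop :=
  Measure.map X ℙ = volume.withDensity (fun x => ENNReal.ofReal (symExpPDF x))

/-- The family `E` consists of i.i.d. symmetric exponential random variables with variance 1. -/
def IIDSymExp {Ω : Type*} [MeasureSpace Ω] {ι : Type*} (E : ι → Ω → ℝ) : Prop :=
  iIndepFun E ℙ ∧ ∀ i, IsSymExp (E i)

/-- The Euclidean norm on `ι → ℝ`. -/
def eNorm {ι : Type*} [Fintype ι] (x : ι → ℝ) : ℝ := Real.sqrt (∑ i, (x i)^2)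

/-- The ℓ∞ (sup) norm on `ι → ℝ`. -/
def supNorm {ι : Type*} [Fintype ι] (x : ι → ℝ) : ℝ := ⨆ i, |x i|

/-- The Euclidean (ℓ₂) metric. -/
def rho2 {ι : Type*} [Fintype ι] (x y : ι → ℝ) : ℝ := eNorm (x - y)

/-- The ℓ∞ metric. -/
def rhoInf {ι : Type*} [Fintype ι] (x y : ι → ℝ) : ℝ := supNorm (x - y)

/-- An origin-symmetric convex body: convex, compact, symmetric, with 0 in the interior. -/
def IsSymmConvexBody {ι : Type*} [Fintype ι] (K : Set (ι → ℝ)) : Prop :=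
  Convex ℝ K ∧ IsCompact K ∧ (∀ x ∈ K, -x ∈ K) ∧ 0 ∈ interior K

/-- The polar body `K° = {x : ⟨x,y⟩ ≤ 1 for all y ∈ K}`. -/
def polarSet {ι : Type*} [Fintype ι] (K : Set (ι → ℝ)) : Set (ι → ℝ) :=
  {x | ∀ y ∈ K, ∑ i, x i * y i ≤ 1}

/-- The operator norm `‖M : K → L‖` of a matrix `M` from the gauge of `K` to the gauge of `L`. -/
def opNormKL {n N : ℕ} (K : Set (Fin N → ℝ)) (L : Set (Fin n → ℝ))
    (M : Matrix (Fin n) (Fin N) ℝ) : ℝ :=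
  ⨆ x ∈ K, gauge L (M.mulVec x)

/-- `R(K) = ‖Id : K → B₂‖`, the Euclidean circumradius of `K`. -/
def RK {ι : Type*} [Fintype ι] (K : Set (ι → ℝ)) : ℝ := ⨆ x ∈ K, eNorm x

/-- A random vector is log-concave if it has a log-concave density with respect to Lebesgue
measure. -/
def IsLogConcaveVec {Ω : Type*} [MeasureSpace Ω] {ι : Type*} [Fintype ι]
    (X : Ω → ι → ℝ) : Prop :=
  ∃ f : (ι → ℝ) → ℝ, (∀ x, 0 ≤ f x) ∧
    (∀ x y : ι → ℝ, ∀ l : ℝ, 0 ≤ l → l ≤ 1 →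
      f x ^ (1 - l) * f y ^ l ≤ f ((1 - l) • x + l • y)) ∧
    Measure.map X ℙ = volume.withDensity (fun x => ENNReal.ofReal (f x))

/-- A random vector is isotropic if all linear marginals are centered with
`E⟨X,y⟩² = |y|²`. -/
def IsIsotropicVec {Ω : Type*} [MeasureSpace Ω] {ι : Type*} [Fintype ι]
    (X : Ω → ι → ℝ) : Prop :=
  (∀ y : ι → ℝ, (∫ ω, (∑ i, X ω i * y i)) = 0) ∧
  (∀ y : ι → ℝ, (∫ ω, (∑ i, X ω i * y i)^2) = ∑ i, (y i)^2)

/-- A random vector is unconditional if its law is invariant under sign flips of the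
coordinates. -/
def IsUnconditionalVec {Ω : Type*} [MeasureSpace Ω] {ι : Type*} [Fintype ι]
    (X : Ω → ι → ℝ) : Prop :=
  ∀ ε : ι → ℝ, (∀ i, ε i = 1 ∨ ε i = -1) →
    Measure.map (fun ω i => ε i * X ω i) ℙ = Measure.map X ℙ

/-- A random `n × N` matrix viewed as a random vector in `ℝ^{nN}`. -/
def matToVec {Ω : Type*} {n N : ℕ} (Γ : Ω → Matrix (Fin n) (Fin N) ℝ) :
    Ω → (Fin n × Fin N) → ℝ :=
  fun ω p => Γ ω p.1 p.2

/-- `x` is `m`-sparse: it has at most `m` nonzero coordinates. -/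
def SparseLe {ι : Type*} (m : ℕ) (x : ι → ℝ) : Prop :=
  ∃ s : Finset ι, s.card ≤ m ∧ ∀ i ∉ s, x i = 0

/-- Talagrand's `γ_q` functional of a set `T` with respect to a distance `ρ`;
the infimum runs over admissible sequences of (nonempty, finite) subsets of `T`. -/
def gammaQ {α : Type*} (q : ℝ) (T : Set α) (ρ : α → α → ℝ) : ℝ :=
  ⨅ A : {A : ℕ → Finset α //
      (∀ s, (A s).Nonempty ∧ ↑(A s) ⊆ T) ∧ (A 0).card = 1 ∧
      ∀ s, (A s).card ≤ 2 ^ 2 ^ s},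
    ⨆ x ∈ T, ∑' s : ℕ, (2:ℝ) ^ (((s:ℝ) + 1) / q) * (⨅ a ∈ A.1 (s + 1), ρ x a)

/-- `Γ_{k,m}`: the supremum of the Euclidean operator norms of the `k × m` submatrices of `M`. -/
def Gkm {n N : ℕ} (M : Matrix (Fin n) (Fin N) ℝ) (k m : ℕ) : ℝ :=
  ⨆ J : {J : Finset (Fin n) // J.card = k},
    ⨆ I : {I : Finset (Fin N) // I.card = m},
      ⨆ x : {x : Fin N → ℝ // eNorm x ≤ 1 ∧ ∀ j ∉ I.1, x j = 0},
        Real.sqrt (∑ i ∈ J.1, (M.mulVec x.1 i) ^ 2)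

/-- `f` is a norm on `ι → ℝ`. -/
def IsNorm {ι : Type*} [Fintype ι] (f : (ι → ℝ) → ℝ) : Prop :=
  (∀ x, 0 ≤ f x) ∧ (∀ x, f x = 0 → x = 0) ∧
  (∀ (c : ℝ) (x : ι → ℝ), f (c • x) = |c| * f x) ∧ ∀ x y, f (x + y) ≤ f x + f y

/-- The Banach–Mazur distance from `K` to the Euclidean ball. -/
def bmDist {ι : Type*} [Fintype ι] (K : Set (ι → ℝ)) : ℝ :=
  sInf {α : ℝ | 1 ≤ α ∧ ∃ T : (ι → ℝ) ≃ₗ[ℝ] (ι → ℝ),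
    (∀ x, eNorm x ≤ 1 → T x ∈ K) ∧ ∀ y ∈ K, ∃ x, eNorm x ≤ 1 ∧ y = α • (T x)}

/-- The set `K ⊗ L' = {x ⊗ y : x ∈ K, y ∈ L'}` of rank-one matrices. -/
def tensorSet {n N : ℕ} (K : Set (Fin N → ℝ)) (L' : Set (Fin n → ℝ)) :
    Set (Matrix (Fin n) (Fin N) ℝ) :=
  {M | ∃ x ∈ K, ∃ y ∈ L', M = Matrix.of fun i j => y i * x j}

/-- The entries of a random matrix, as a family of real random variables. -/
def matEntries {Ω : Type*} {n N : ℕ} (Γ : Ω → Matrix (Fin n) (Fin N) ℝ) :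
    (Fin n × Fin N) → Ω → ℝ :=
  fun p ω => Γ ω p.1 p.2

/-!
Each `|E i j|` is exponential with rate `√2`, so a column sum `S j = ∑ i, |E i j|` has mean
`n / √2` and moment generating function `2 ^ n` at `√2 / 2`. Hence `𝔼 max_j S j ≥ 𝔼 S 0 = n / √2`.
Along the first row, independence gives `ℙ (max_j |E 0 j| ≤ t) = (1 - 1 / N) ^ N ≤ 1 / 2` at
`t = ln N / √2`, so Markov's inequality yields `𝔼 max_j S j ≥ ln N / (2 √2)`. For the upper
bound, the tangent line of `exp` at `ln M`, with `M = ∑ j, 𝔼 exp (λ S j) = N 2 ^ n` and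
`λ = √2 / 2`, gives `𝔼 max_j S j ≤ ln M / λ = √2 (n ln 2 + ln N)`.
-/

open Set

def symExpMeasure : Measure ℝ := volume.withDensity fun x => ENNReal.ofReal (symExpPDF x)

lemma symExpPDF_eq (x : ℝ) : symExpPDF x = (√2)⁻¹ * exp (-(√2 * |x|)) := by
  rw [symExpPDF, rpow_neg zero_le_two, ← sqrt_eq_rpow, neg_mul]

lemma symExpPDF_nonneg (x : ℝ) : 0 ≤ symExpPDF x := by
  rw [symExpPDF_eq]; positivity

lemma integral_comp_abs_symExpMeasure (g : ℝ → ℝ) :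
    ∫ x, g |x| ∂symExpMeasure = √2 * ∫ y in Ioi 0, exp (-(√2 * y)) * g y := by
  have hpdf : Measurable symExpPDF := by unfold symExpPDF; fun_prop
  rw [symExpMeasure, integral_withDensity_eq_integral_toReal_smul hpdf.ennreal_ofReal
    (.of_forall fun _ => ENNReal.ofReal_lt_top)]
  simp_rw [ENNReal.toReal_ofReal (symExpPDF_nonneg _), smul_eq_mul, symExpPDF_eq,
    mul_assoc]
  rw [integral_comp_abs (f := fun y => (√2)⁻¹ * (exp (-(√2 * y)) * g y)), integral_const_mul,
    ← mul_assoc]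
  congr 1
  field_simp
  rw [sq_sqrt zero_le_two]

lemma integral_abs_symExpMeasure : ∫ x, |x| ∂symExpMeasure = (√2)⁻¹ := by
  rw [integral_comp_abs_symExpMeasure (fun y => y)]
  have := integral_rpow_mul_exp_neg_mul_Ioi (a := 2) two_pos (by positivity : (0:ℝ) < √2)
  simp only [show (2:ℝ) - 1 = 1 by norm_num, rpow_one, Gamma_two, mul_one] at this
  simp only [mul_comm (exp _), this, rpow_two]
  field_simp

lemma integral_exp_mul_abs_symExpMeasure {t : ℝ} (ht : t < √2) :
    ∫ x, exp (t * |x|) ∂symExpMeasure = √2 / (√2 - t) := by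
  rw [integral_comp_abs_symExpMeasure (fun y => exp (t * y))]
  simp_rw [← exp_add, show ∀ y, -(√2 * y) + t * y = (t - √2) * y from fun y => by ring]
  rw [integral_exp_mul_Ioi (by linarith), mul_zero, exp_zero, ← neg_sub √2 t,
    neg_div_neg_eq, mul_one_div]

instance : IsProbabilityMeasure symExpMeasure := by
  have h := integral_exp_mul_abs_symExpMeasure (t := 0) (by positivity)
  simp only [zero_mul, exp_zero, integral_const, smul_eq_mul, mul_one, sub_zero,
    div_self (by positivity : (√2:ℝ) ≠ 0)] at h
  exact ⟨by rwa [measureReal_def, ENNReal.toReal_eq_one_iff] at h⟩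

lemma measureReal_lt_abs_symExpMeasure {t : ℝ} (ht : 0 ≤ t) :
    symExpMeasure.real {x | t < |x|} = exp (-(√2 * t)) := by
  have hs : MeasurableSet {x : ℝ | t < |x|} := measurableSet_lt measurable_const measurable_abs
  have hind : {x : ℝ | t < |x|}.indicator (1 : ℝ → ℝ) = fun x => (Ioi t).indicator 1 |x| := by
    ext x; simp [indicator]
  rw [← integral_indicator_one hs, hind, integral_comp_abs_symExpMeasure]
  have hmul (y : ℝ) : exp (-(√2 * y)) * (Ioi t).indicator 1 y =
      (Ioi t).indicator (fun y => exp (-(√2 * y))) y := by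
    simp only [indicator_apply, Pi.one_apply, mul_ite, mul_one, mul_zero]
  simp_rw [hmul]
  rw [setIntegral_indicator measurableSet_Ioi, Ioi_inter_Ioi, max_eq_right ht]
  simp_rw [← neg_mul]
  rw [integral_exp_mul_Ioi (by simp), neg_mul, neg_div_neg_eq]
  field_simp

namespace IsSymExp

variable {Ω : Type*} [MeasureSpace Ω] {X : Ω → ℝ}

lemma map_eq (hX : IsSymExp X) : Measure.map X ℙ = symExpMeasure := hX

lemma aemeasurable (hX : IsSymExp X) : AEMeasurable X ℙ := by
  by_contra h
  have h0 : Measure.map X ℙ = 0 := Measure.map_of_not_aemeasurable h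
  exact IsProbabilityMeasure.ne_zero symExpMeasure (h0 ▸ hX.map_eq).symm

lemma integral_comp (hX : IsSymExp X) {f : ℝ → ℝ} (hf : Measurable f) :
    ∫ ω, f (X ω) = ∫ x, f x ∂symExpMeasure := by
  rw [← hX.map_eq, integral_map hX.aemeasurable (hX.map_eq ▸ hf.aestronglyMeasurable)]

lemma integral_abs (hX : IsSymExp X) : ∫ ω, |X ω| = (√2)⁻¹ :=
  (hX.integral_comp measurable_abs).trans integral_abs_symExpMeasure

lemma integrable_abs (hX : IsSymExp X) : Integrable (fun ω => |X ω|) :=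
  .of_integral_ne_zero (by rw [hX.integral_abs]; positivity)

lemma mgf_abs (hX : IsSymExp X) {t : ℝ} (ht : t < √2) :
    mgf (fun ω => |X ω|) ℙ t = √2 / (√2 - t) :=
  (hX.integral_comp (f := fun x => exp (t * |x|)) (by fun_prop)).trans
    (integral_exp_mul_abs_symExpMeasure ht)

lemma integrable_exp_mul_abs (hX : IsSymExp X) {t : ℝ} (ht : t < √2) :
    Integrable (fun ω => exp (t * |X ω|)) :=
  .of_integral_ne_zero (by
    rw [← mgf, hX.mgf_abs ht]
    exact (div_pos (by positivity) (sub_pos.2 ht)).ne')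

lemma measureReal_abs_le (hX : IsSymExp X) {t : ℝ} (ht : 0 ≤ t) :
    (ℙ : Measure Ω).real {ω | |X ω| ≤ t} = 1 - exp (-(√2 * t)) := by
  have hs : MeasurableSet {x : ℝ | t < |x|} := measurableSet_lt measurable_const measurable_abs
  have hpre : {ω | |X ω| ≤ t} = X ⁻¹' {x | t < |x|}ᶜ := by ext; simp
  rw [hpre, ← map_measureReal_apply_of_aemeasurable hX.aemeasurable hs.compl, hX.map_eq,
    probReal_compl_eq_one_sub hs, measureReal_lt_abs_symExpMeasure ht]

end IsSymExp

section MaximalInequalities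

variable {Ω ι : Type*} [MeasurableSpace Ω] {μ : Measure Ω} [Fintype ι]

lemma integrable_iSup [Nonempty ι] {S : ι → Ω → ℝ} (hS : ∀ j, Integrable (S j) μ) :
    Integrable (fun ω => ⨆ j, S j ω) μ := by
  refine (integrable_finsetSum Finset.univ fun j _ => (hS j).abs).mono'
    (AEMeasurable.iSup fun j => (hS j).aemeasurable).aestronglyMeasurable
    (.of_forall fun ω => ?_)
  have hle (j : ι) : |S j ω| ≤ ∑ k, |S k ω| :=
    Finset.single_le_sum (f := fun k => |S k ω|) (fun k _ => abs_nonneg _) (Finset.mem_univ j)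
  obtain ⟨j₀⟩ := ‹Nonempty ι›
  rw [Real.norm_eq_abs, abs_le]
  constructor
  · exact (neg_le_neg (hle j₀)).trans ((neg_abs_le _).trans
      (le_ciSup (Finite.bddAbove_range fun j => S j ω) j₀))
  · exact ciSup_le fun j => (le_abs_self _).trans (hle j)

variable [IsProbabilityMeasure μ]

lemma mul_one_sub_prod_measureReal_le_integral {Y : ι → Ω → ℝ} (hY : iIndepFun Y μ)
    {F : Ω → ℝ} (hF : Integrable F μ) (hF0 : 0 ≤ᵐ[μ] F) (hYF : ∀ j ω, Y j ω ≤ F ω)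
    {t : ℝ} (ht : 0 ≤ t) :
    t * (1 - ∏ j, μ.real {ω | Y j ω ≤ t}) ≤ ∫ ω, F ω ∂μ := by
  set A := ⋂ j, {ω | Y j ω ≤ t}
  have hA : μ.real A = ∏ j, μ.real {ω | Y j ω ≤ t} := by
    have := hY.measure_inter_preimage_eq_mul Finset.univ (sets := fun _ => Iic t)
      (fun _ _ => measurableSet_Iic)
    simp only [Finset.mem_univ, iInter_true] at this
    simp only [A, measureReal_def, ← ENNReal.toReal_prod]
    exact congrArg ENNReal.toReal this
  have hAc : Aᶜ ⊆ {ω | t ≤ F ω} := by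
    intro ω hω
    obtain ⟨j, hj⟩ : ∃ j, t < Y j ω := by simpa [A] using hω
    exact hj.le.trans (hYF j ω)
  calc t * (1 - ∏ j, μ.real {ω | Y j ω ≤ t})
      ≤ t * μ.real Aᶜ := by
        gcongr
        have := measureReal_union_le (μ := μ) A Aᶜ
        rw [union_compl_self, probReal_univ] at this
        linarith
    _ ≤ t * μ.real {ω | t ≤ F ω} := mul_le_mul_of_nonneg_left (measureReal_mono hAc) ht
    _ ≤ ∫ ω, F ω ∂μ := mul_meas_ge_le_integral_of_nonneg hF0 hF t

lemma integral_iSup_le_log_sum_mgf_div [Nonempty ι] {S : ι → Ω → ℝ}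
    (hF : Integrable (fun ω => ⨆ j, S j ω) μ) {l : ℝ}
    (hl : 0 < l) (hS : ∀ j, Integrable (fun ω => exp (l * S j ω)) μ) :
    ∫ ω, ⨆ j, S j ω ∂μ ≤ log (∑ j, mgf (S j) μ l) / l := by
  set M := ∑ j, mgf (S j) μ l
  have hM : 0 < M := Finset.sum_pos (fun j _ => mgf_pos (hS j)) Finset.univ_nonempty
  -- tangent line of `exp` at `log M`
  have hpoint (ω : Ω) : ⨆ j, S j ω ≤ (log M - 1) / l + (l * M)⁻¹ * ∑ k, exp (l * S k ω) := by
    refine ciSup_le fun j => ?_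
    have htan := add_one_le_exp (l * S j ω - log M)
    rw [exp_sub, exp_log hM] at htan
    have hsum : exp (l * S j ω) ≤ ∑ k, exp (l * S k ω) :=
      Finset.single_le_sum (f := fun k => exp (l * S k ω)) (fun k _ => (exp_pos _).le)
        (Finset.mem_univ j)
    have hlin : l * S j ω ≤ log M - 1 + (∑ k, exp (l * S k ω)) / M := by
      linarith [div_le_div_of_nonneg_right hsum hM.le]
    calc S j ω = l * S j ω / l := by field_simp
      _ ≤ (log M - 1 + (∑ k, exp (l * S k ω)) / M) / l := by gcongr
      _ = (log M - 1) / l + (l * M)⁻¹ * ∑ k, exp (l * S k ω) := by field_simp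
  have hexp : Integrable (fun ω => (l * M)⁻¹ * ∑ k, exp (l * S k ω)) μ :=
    (integrable_finsetSum _ fun k _ => hS k).const_mul _
  calc ∫ ω, ⨆ j, S j ω ∂μ
      ≤ ∫ ω, ((log M - 1) / l + (l * M)⁻¹ * ∑ k, exp (l * S k ω)) ∂μ :=
        integral_mono hF ((integrable_const _).add hexp) hpoint
    _ = (log M - 1) / l + (l * M)⁻¹ * M := by
        rw [integral_add (integrable_const _) hexp, integral_const, probReal_univ, one_smul,
          integral_const_mul, integral_finsetSum _ fun k _ => hS k]
        rfl
    _ = log M / l := by field_simp; ring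

end MaximalInequalities

section ColumnSums

variable {n N : ℕ} (M : Matrix (Fin n) (Fin N) ℝ)

lemma colSum_abs_le_iSup (j : Fin N) : ∑ i, |M i j| ≤ ⨆ j, ∑ i, |M i j| :=
  le_ciSup (Finite.bddAbove_range fun j => ∑ i, |M i j|) j

lemma abs_le_iSup_colSum_abs (i : Fin n) (j : Fin N) : |M i j| ≤ ⨆ j, ∑ i, |M i j| :=
  (Finset.single_le_sum (f := fun i => |M i j|) (fun _ _ => abs_nonneg _)
    (Finset.mem_univ i)).trans (colSum_abs_le_iSup M j)

end ColumnSums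

namespace IIDSymExp

variable {Ω : Type*} [MeasureSpace Ω] {n N : ℕ}
  {Γ : Ω → Matrix (Fin n) (Fin N) ℝ}

lemma isSymExp_entry (hΓ : IIDSymExp (matEntries Γ)) (i : Fin n) (j : Fin N) :
    IsSymExp fun ω => Γ ω i j :=
  hΓ.2 (i, j)

lemma iIndepFun_abs_col (hΓ : IIDSymExp (matEntries Γ)) (j : Fin N) :
    iIndepFun (fun i ω => |Γ ω i j|) ℙ :=
  (hΓ.1.precomp (Prod.mk_left_injective j)).comp (fun _ x => |x|) fun _ => measurable_abs

lemma iIndepFun_abs_row (hΓ : IIDSymExp (matEntries Γ)) (i : Fin n) :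
    iIndepFun (fun j ω => |Γ ω i j|) ℙ :=
  (hΓ.1.precomp (Prod.mk_right_injective i)).comp (fun _ x => |x|) fun _ => measurable_abs

lemma integrable_colSum (hΓ : IIDSymExp (matEntries Γ)) (j : Fin N) :
    Integrable fun ω => ∑ i, |Γ ω i j| :=
  integrable_finsetSum _ fun i _ => (hΓ.isSymExp_entry i j).integrable_abs

lemma integral_colSum (hΓ : IIDSymExp (matEntries Γ)) (j : Fin N) :
    ∫ ω, ∑ i, |Γ ω i j| = n / √2 := by
  rw [integral_finsetSum _ fun i _ => (hΓ.isSymExp_entry i j).integrable_abs]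
  simp [fun i => (hΓ.isSymExp_entry i j).integral_abs, div_eq_mul_inv]

lemma mgf_colSum (hΓ : IIDSymExp (matEntries Γ)) (j : Fin N) :
    mgf (fun ω => ∑ i, |Γ ω i j|) ℙ (√2 / 2) = 2 ^ n := by
  have hmgf (i : Fin n) : mgf (fun ω => |Γ ω i j|) ℙ (√2 / 2) = 2 := by
    rw [(hΓ.isSymExp_entry i j).mgf_abs (by linarith [sqrt_pos.2 two_pos])]
    field_simp
    ring
  have := (hΓ.iIndepFun_abs_col j).mgf_sum₀
    (fun i => (hΓ.isSymExp_entry i j).aemeasurable.abs) Finset.univ (t := √2 / 2)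
  rwa [Finset.sum_fn, Finset.prod_congr rfl fun i _ => hmgf i, Finset.prod_const,
    Finset.card_univ, Fintype.card_fin] at this

lemma integrable_exp_mul_colSum (hΓ : IIDSymExp (matEntries Γ)) (j : Fin N) :
    Integrable fun ω => exp (√2 / 2 * ∑ i, |Γ ω i j|) :=
  .of_integral_ne_zero (by rw [← mgf, hΓ.mgf_colSum j]; positivity)

variable [NeZero N]

lemma integrable_iSup_colSum (hΓ : IIDSymExp (matEntries Γ)) :
    Integrable fun ω => ⨆ j, ∑ i, |Γ ω i j| :=
  integrable_iSup hΓ.integrable_colSum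

lemma div_sqrt_two_le_integral_iSup_colSum (hΓ : IIDSymExp (matEntries Γ)) :
    n / √2 ≤ ∫ ω, ⨆ j, ∑ i, |Γ ω i j| := by
  rw [← hΓ.integral_colSum 0]
  exact integral_mono (hΓ.integrable_colSum 0) hΓ.integrable_iSup_colSum
    fun ω => colSum_abs_le_iSup (Γ ω) 0

variable [IsProbabilityMeasure (ℙ : Measure Ω)]

lemma log_div_le_integral_iSup_colSum [NeZero n] (hΓ : IIDSymExp (matEntries Γ)) :
    log N / (2 * √2) ≤ ∫ ω, ⨆ j, ∑ i, |Γ ω i j| := by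
  set t := log N / √2
  have ht : 0 ≤ t := div_nonneg (log_natCast_nonneg N) (sqrt_nonneg 2)
  have htail (j : Fin N) : (ℙ : Measure Ω).real {ω | |Γ ω 0 j| ≤ t} = 1 - 1 / N := by
    rw [(hΓ.isSymExp_entry 0 j).measureReal_abs_le ht, mul_div_cancel₀ _ (by positivity),
      exp_neg, exp_log (by exact_mod_cast NeZero.pos N), one_div]
  have hmax := mul_one_sub_prod_measureReal_le_integral (hΓ.iIndepFun_abs_row 0)
    hΓ.integrable_iSup_colSum
    (.of_forall fun ω => (abs_nonneg _).trans (abs_le_iSup_colSum_abs (Γ ω) 0 0))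
    (fun j ω => abs_le_iSup_colSum_abs (Γ ω) 0 j) ht
  simp only [htail, Finset.prod_const, Finset.card_univ, Fintype.card_fin] at hmax
  have hpow : (1 - 1 / (N : ℝ)) ^ N ≤ 1 / 2 := by
    refine (one_sub_div_pow_le_exp_neg (by exact_mod_cast NeZero.one_le)).trans ?_
    rw [exp_neg, one_div]
    exact inv_anti₀ two_pos (by linarith [add_one_le_exp 1])
  calc log N / (2 * √2) = t * (1 / 2) := by ring
    _ ≤ t * (1 - (1 - 1 / (N : ℝ)) ^ N) := by gcongr; linarith
    _ ≤ _ := hmax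

lemma integral_iSup_colSum_le (hΓ : IIDSymExp (matEntries Γ)) :
    ∫ ω, ⨆ j, ∑ i, |Γ ω i j| ≤ √2 * (n * log 2 + log N) := by
  have h := integral_iSup_le_log_sum_mgf_div (S := fun j ω => ∑ i, |Γ ω i j|)
    hΓ.integrable_iSup_colSum (by positivity) hΓ.integrable_exp_mul_colSum
  simp only [hΓ.mgf_colSum, Finset.sum_const, Finset.card_univ, Fintype.card_fin,
    nsmul_eq_mul] at h
  rw [log_mul (by exact_mod_cast NeZero.ne N) (by positivity), log_pow] at h
  convert h using 1
  field_simp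
  rw [sq_sqrt zero_le_two]
  ring

end IIDSymExp

/-- The expected `ℓ₁^N → ℓ₁^n` operator norm of the exponential random matrix is of
order `n + ln N`. -/
theorem exponential_matrix_l1_norm :
    ∃ c C : ℝ, 0 < c ∧ 0 < C ∧
      ∀ (n N : ℕ), 0 < n → 0 < N →
      ∀ (Ω : Type) [MeasureSpace Ω], IsProbabilityMeasure (ℙ : Measure Ω) →
      ∀ (Γ : Ω → Matrix (Fin n) (Fin N) ℝ), IIDSymExp (matEntries Γ) →
        c * ((n : ℝ) + Real.log N) ≤ (∫ ω, ⨆ j : Fin N, ∑ i : Fin n, |Γ ω i j|) ∧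
        (∫ ω, ⨆ j : Fin N, ∑ i : Fin n, |Γ ω i j|) ≤ C * ((n : ℝ) + Real.log N) := by
  refine ⟨1 / 6, 2, by norm_num, by norm_num, fun n N hn hN Ω _ _ Γ hΓ => ?_⟩
  have : NeZero n := ⟨hn.ne'⟩
  have : NeZero N := ⟨hN.ne'⟩
  set I := ∫ ω, ⨆ j, ∑ i, |Γ ω i j|
  have hsqrt : √2 < 2 := by rw [sqrt_lt' two_pos]; norm_num
  have hsqrt₀ : 0 < √2 := by positivity
  have hlog2 : log 2 < 1 := log_two_lt_d9.trans (by norm_num)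
  have hlogN : 0 ≤ log N := log_natCast_nonneg N
  have hI : 0 ≤ I := (div_nonneg (Nat.cast_nonneg n) hsqrt₀.le).trans
    hΓ.div_sqrt_two_le_integral_iSup_colSum
  have hn_le : (n : ℝ) ≤ 2 * I := by
    have := hΓ.div_sqrt_two_le_integral_iSup_colSum
    rw [div_le_iff₀ hsqrt₀] at this
    nlinarith
  have hlogN_le : log N ≤ 4 * I := by
    have := hΓ.log_div_le_integral_iSup_colSum
    rw [div_le_iff₀ (by positivity)] at this
    nlinarith
  have hup := hΓ.integral_iSup_colSum_le
  constructor
  · linarith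
  · nlinarith [mul_le_mul_of_nonneg_left hlog2.le (Nat.cast_nonneg n : (0 : ℝ) ≤ n)]
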